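/- Let H be an n-vertex C5-free 3-graph with δ2^+(H) ≥ n/2 containing a K4 on vertices vi, vj, vk, vl. Then for every pair among these four vertices, |N(v, v')| = n/2, and every vertex of H belongs to exactly 3 of the six link sets N(vi,vj), N(vi,vk), N(vi,vl), N(vj,vk), N(vj,vl), N(vk,vl). -/
import Mathlib


open Finset

/-- The link (co-neighborhood) of the pair `{u,v}`: all `w` with `{u,v,w}` an edge. -/
def link {n : ℕ} (E : Finset (Finset (Fin n))) (u v : Fin n) : Finset (Fin n) :=
  Finset.univ.filter (fun w => ({u, v, w} : Finset (Fin n)) ∈ E)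

/-- `E` is the edge set of a 3-graph: every edge has exactly 3 vertices. -/
def isEdgeSet {n : ℕ} (E : Finset (Finset (Fin n))) : Prop := ∀ e ∈ E, e.card = 3

/-- `E` contains a copy of `C5⁻ = {abc, bcd, cde, dea}`. -/
def hasC5minus {n : ℕ} (E : Finset (Finset (Fin n))) : Prop :=
  ∃ a b c d e : Fin n,
    a ≠ b ∧ a ≠ c ∧ a ≠ d ∧ a ≠ e ∧ b ≠ c ∧ b ≠ d ∧ b ≠ e ∧ c ≠ d ∧ c ≠ e ∧ d ≠ e ∧
    ({a, b, c} : Finset (Fin n)) ∈ E ∧ ({b, c, d} : Finset (Fin n)) ∈ E ∧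
    ({c, d, e} : Finset (Fin n)) ∈ E ∧ ({d, e, a} : Finset (Fin n)) ∈ E

/-- `E` contains a copy of `C5 = {abc, bcd, cde, dea, eab}`. -/
def hasC5 {n : ℕ} (E : Finset (Finset (Fin n))) : Prop :=
  ∃ a b c d e : Fin n,
    a ≠ b ∧ a ≠ c ∧ a ≠ d ∧ a ≠ e ∧ b ≠ c ∧ b ≠ d ∧ b ≠ e ∧ c ≠ d ∧ c ≠ e ∧ d ≠ e ∧
    ({a, b, c} : Finset (Fin n)) ∈ E ∧ ({b, c, d} : Finset (Fin n)) ∈ E ∧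
    ({c, d, e} : Finset (Fin n)) ∈ E ∧ ({d, e, a} : Finset (Fin n)) ∈ E ∧
    ({e, a, b} : Finset (Fin n)) ∈ E

/-- `a, b, c, d` form a `K4` in `E`: all four triples among them are edges. -/
def isK4 {n : ℕ} (E : Finset (Finset (Fin n))) (a b c d : Fin n) : Prop :=
  a ≠ b ∧ a ≠ c ∧ a ≠ d ∧ b ≠ c ∧ b ≠ d ∧ c ≠ d ∧
  ({a, b, c} : Finset (Fin n)) ∈ E ∧ ({a, b, d} : Finset (Fin n)) ∈ E ∧
  ({a, c, d} : Finset (Fin n)) ∈ E ∧ ({b, c, d} : Finset (Fin n)) ∈ E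

/-- `E` contains a copy of `K4⁻ = {abc, abd, acd}`. -/
def hasK4minus {n : ℕ} (E : Finset (Finset (Fin n))) : Prop :=
  ∃ a b c d : Fin n, a ≠ b ∧ a ≠ c ∧ a ≠ d ∧ b ≠ c ∧ b ≠ d ∧ c ≠ d ∧
    ({a, b, c} : Finset (Fin n)) ∈ E ∧ ({a, b, d} : Finset (Fin n)) ∈ E ∧
    ({a, c, d} : Finset (Fin n)) ∈ E

/-- `A`-set of a `K4`: intersection of the three pairwise links of `{x, y, z}`
(the set `A_w` for the fourth vertex `w` of the `K4`). -/
def Aset {n : ℕ} (E : Finset (Finset (Fin n))) (x y z : Fin n) : Finset (Fin n) :=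
  link E x y ∩ link E y z ∩ link E z x

/-- `B`-set of a `K4`: `B_w = N(w,x) ∩ N(w,y) ∩ N(w,z)`. -/
def Bset {n : ℕ} (E : Finset (Finset (Fin n))) (w x y z : Fin n) : Finset (Fin n) :=
  link E w x ∩ link E w y ∩ link E w z


section helpers
variable {n : ℕ} {E : Finset (Finset (Fin n))}

lemma mem_link {u v w : Fin n} : w ∈ link E u v ↔ ({u, v, w} : Finset (Fin n)) ∈ E := by
  simp [link]

lemma edge_of_eq {a b c x y z : Fin n} (h : ({a,b,c}:Finset (Fin n)) ∈ E)
    (heq : ({x,y,z}:Finset (Fin n)) = {a,b,c}) : ({x,y,z}:Finset (Fin n)) ∈ E := heq ▸ h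

lemma mem_link_comm {u v w : Fin n} (h : w ∈ link E u v) : w ∈ link E v u := by
  rw [mem_link] at h ⊢
  exact edge_of_eq h (by ext t; simp; tauto)

lemma not_mem_link_left (hE : isEdgeSet E) {x y : Fin n} (hxy : x ≠ y) : x ∉ link E x y := by
  rw [mem_link]
  intro h
  have h3 := hE _ h
  have he : ({x,y,x}:Finset (Fin n)) = {x,y} := by ext t; simp; tauto
  rw [he, Finset.card_pair hxy] at h3
  omega

lemma not_mem_link_right (hE : isEdgeSet E) {x y : Fin n} (hxy : x ≠ y) : y ∉ link E x y := by
  rw [mem_link]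
  intro h
  have h3 := hE _ h
  have he : ({x,y,y}:Finset (Fin n)) = {x,y} := by ext t; simp
  rw [he, Finset.card_pair hxy] at h3
  omega

lemma c5_of_path (a b c d v : Fin n)
    (hab : a≠b) (hac : a≠c) (had : a≠d) (hav : a≠v)
    (hbc : b≠c) (hbd : b≠d) (hbv : b≠v)
    (hcd : c≠d) (hcv : c≠v) (hdv : d≠v)
    (e1 : v ∈ link E a b) (e2 : v ∈ link E b c) (e3 : v ∈ link E c d)
    (e4 : ({a,c,d}:Finset (Fin n)) ∈ E) (e5 : ({a,b,d}:Finset (Fin n)) ∈ E) :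
    hasC5 E := by
  rw [mem_link] at e1 e2 e3
  exact ⟨a, b, v, c, d, hab, hav, hac, had, hbv, hbc, hbd, hcv.symm, hdv.symm, hcd,
    e1,
    edge_of_eq e2 (by ext t; simp; tauto),
    edge_of_eq e3 (by ext t; simp; tauto),
    edge_of_eq e4 (by ext t; simp; tauto),
    edge_of_eq e5 (by ext t; simp; tauto)⟩

end helpers
lemma indicator_aux (p1 p2 p3 p4 p5 p6 : Prop)
    [Decidable p1] [Decidable p2] [Decidable p3] [Decidable p4] [Decidable p5] [Decidable p6]
    (h1 : ¬(p1∧p4∧p6)) (h2 : ¬(p1∧p5∧p6)) (h3 : ¬(p2∧p4∧p5)) (h4 : ¬(p2∧p6∧p5))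
    (h5 : ¬(p3∧p5∧p4)) (h6 : ¬(p3∧p6∧p4)) (h7 : ¬(p1∧p2∧p6)) (h8 : ¬(p1∧p3∧p6))
    (h9 : ¬(p4∧p2∧p3)) (h10 : ¬(p5∧p3∧p2)) (h11 : ¬(p2∧p1∧p5)) (h12 : ¬(p4∧p1∧p3)) :
    (if p1 then 1 else 0) + (if p2 then 1 else 0) + (if p3 then 1 else 0) +
    (if p4 then 1 else 0) + (if p5 then 1 else 0) + (if p6 then 1 else 0) ≤ 3 := by
  by_cases p1 <;> by_cases p2 <;> by_cases p3 <;> by_cases p4 <;> by_cases p5 <;>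
    by_cases p6 <;> simp_all

lemma count_le_three {n : ℕ} {E : Finset (Finset (Fin n))} (hE : isEdgeSet E)
    (hC5free : ¬ hasC5 E) (vi vj vk vl : Fin n) (hK4 : isK4 E vi vj vk vl) (v : Fin n) :
    (if v ∈ link E vi vj then 1 else 0) + (if v ∈ link E vi vk then 1 else 0) +
    (if v ∈ link E vi vl then 1 else 0) + (if v ∈ link E vj vk then 1 else 0) +
    (if v ∈ link E vj vl then 1 else 0) + (if v ∈ link E vk vl then 1 else 0) ≤ 3 := by
  obtain ⟨nij, nik, nil, njk, njl, nkl, eijk, eijl, eikl, ejkl⟩ := hK4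
  rcases eq_or_ne v vi with rfl | hvi
  · simp [not_mem_link_left hE nij, not_mem_link_left hE nik, not_mem_link_left hE nil]
    all_goals split_ifs <;> omega
  rcases eq_or_ne v vj with rfl | hvj
  · simp [not_mem_link_right hE nij, not_mem_link_left hE njk, not_mem_link_left hE njl]
    all_goals split_ifs <;> omega
  rcases eq_or_ne v vk with rfl | hvk
  · simp [not_mem_link_right hE nik, not_mem_link_right hE njk, not_mem_link_left hE nkl]
    all_goals split_ifs <;> omega
  rcases eq_or_ne v vl with rfl | hvl
  · simp [not_mem_link_right hE nil, not_mem_link_right hE njl, not_mem_link_right hE nkl]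
    all_goals split_ifs <;> omega
  -- derived edge orderings
  have E1 : ({vi,vl,vk}:Finset (Fin n)) ∈ E := edge_of_eq eikl (by ext t; simp; tauto)
  have E2 : ({vi,vl,vj}:Finset (Fin n)) ∈ E := edge_of_eq eijl (by ext t; simp; tauto)
  have E3 : ({vi,vk,vj}:Finset (Fin n)) ∈ E := edge_of_eq eijk (by ext t; simp; tauto)
  have E4 : ({vj,vi,vl}:Finset (Fin n)) ∈ E := edge_of_eq eijl (by ext t; simp; tauto)
  have E5 : ({vj,vl,vk}:Finset (Fin n)) ∈ E := edge_of_eq ejkl (by ext t; simp; tauto)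
  have E6 : ({vj,vi,vk}:Finset (Fin n)) ∈ E := edge_of_eq eijk (by ext t; simp; tauto)
  have E7 : ({vk,vj,vl}:Finset (Fin n)) ∈ E := edge_of_eq ejkl (by ext t; simp; tauto)
  have E8 : ({vk,vi,vl}:Finset (Fin n)) ∈ E := edge_of_eq eikl (by ext t; simp; tauto)
  have E9 : ({vj,vk,vl}:Finset (Fin n)) ∈ E := ejkl
  have E10 : ({vi,vj,vl}:Finset (Fin n)) ∈ E := eijl
  have E11 : ({vi,vj,vk}:Finset (Fin n)) ∈ E := eijk
  have E12 : ({vi,vk,vl}:Finset (Fin n)) ∈ E := eikl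
  have nji := nij.symm; have nki := nik.symm; have nli := nil.symm
  have nkj := njk.symm; have nlj := njl.symm; have nlk := nkl.symm
  have hiv := hvi.symm; have hjv := hvj.symm; have hkv := hvk.symm; have hlv := hvl.symm
  -- the 12 path exclusions
  have H1 : ¬(v ∈ link E vi vj ∧ v ∈ link E vj vk ∧ v ∈ link E vk vl) :=
    fun ⟨m1, m2, m3⟩ => hC5free (c5_of_path vi vj vk vl v nij nik nil hiv njk njl hjv nkl hkv hlv m1 m2 m3 E12 E10)
  have H2 : ¬(v ∈ link E vi vj ∧ v ∈ link E vj vl ∧ v ∈ link E vk vl) :=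
    fun ⟨m1, m2, m3⟩ => hC5free (c5_of_path vi vj vl vk v nij nil nik hiv njl njk hjv nlk hlv hkv m1 m2 (mem_link_comm m3) E1 E11)
  have H3 : ¬(v ∈ link E vi vk ∧ v ∈ link E vj vk ∧ v ∈ link E vj vl) :=
    fun ⟨m1, m2, m3⟩ => hC5free (c5_of_path vi vk vj vl v nik nij nil hiv nkj nkl hkv njl hjv hlv m1 (mem_link_comm m2) m3 E10 E12)
  have H4 : ¬(v ∈ link E vi vk ∧ v ∈ link E vk vl ∧ v ∈ link E vj vl) :=
    fun ⟨m1, m2, m3⟩ => hC5free (c5_of_path vi vk vl vj v nik nil nij hiv nkl nkj hkv nlj hlv hjv m1 m2 (mem_link_comm m3) E2 E3)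
  have H5 : ¬(v ∈ link E vi vl ∧ v ∈ link E vj vl ∧ v ∈ link E vj vk) :=
    fun ⟨m1, m2, m3⟩ => hC5free (c5_of_path vi vl vj vk v nil nij nik hiv nlj nlk hlv njk hjv hkv m1 (mem_link_comm m2) m3 E11 E1)
  have H6 : ¬(v ∈ link E vi vl ∧ v ∈ link E vk vl ∧ v ∈ link E vj vk) :=
    fun ⟨m1, m2, m3⟩ => hC5free (c5_of_path vi vl vk vj v nil nik nij hiv nlk nlj hlv nkj hkv hjv m1 (mem_link_comm m2) (mem_link_comm m3) E3 E2)
  have H7 : ¬(v ∈ link E vi vj ∧ v ∈ link E vi vk ∧ v ∈ link E vk vl) :=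
    fun ⟨m1, m2, m3⟩ => hC5free (c5_of_path vj vi vk vl v nji njk njl hjv nik nil hiv nkl hkv hlv (mem_link_comm m1) m2 m3 E9 E4)
  have H8 : ¬(v ∈ link E vi vj ∧ v ∈ link E vi vl ∧ v ∈ link E vk vl) :=
    fun ⟨m1, m2, m3⟩ => hC5free (c5_of_path vj vi vl vk v nji njl njk hjv nil nik hiv nlk hlv hkv (mem_link_comm m1) m2 (mem_link_comm m3) E5 E6)
  have H9 : ¬(v ∈ link E vj vk ∧ v ∈ link E vi vk ∧ v ∈ link E vi vl) :=
    fun ⟨m1, m2, m3⟩ => hC5free (c5_of_path vj vk vi vl v njk nji njl hjv nki nkl hkv nil hiv hlv m1 (mem_link_comm m2) m3 E4 E9)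
  have H10 : ¬(v ∈ link E vj vl ∧ v ∈ link E vi vl ∧ v ∈ link E vi vk) :=
    fun ⟨m1, m2, m3⟩ => hC5free (c5_of_path vj vl vi vk v njl nji njk hjv nli nlk hlv nik hiv hkv m1 (mem_link_comm m2) m3 E6 E5)
  have H11 : ¬(v ∈ link E vi vk ∧ v ∈ link E vi vj ∧ v ∈ link E vj vl) :=
    fun ⟨m1, m2, m3⟩ => hC5free (c5_of_path vk vi vj vl v nki nkj nkl hkv nij nil hiv njl hjv hlv (mem_link_comm m1) m2 m3 E7 E8)
  have H12 : ¬(v ∈ link E vj vk ∧ v ∈ link E vi vj ∧ v ∈ link E vi vl) :=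
    fun ⟨m1, m2, m3⟩ => hC5free (c5_of_path vk vj vi vl v nkj nki nkl hkv nji njl hjv nil hiv hlv (mem_link_comm m1) (mem_link_comm m2) m3 E8 E7)
  exact indicator_aux _ _ _ _ _ _ H1 H2 H3 H4 H5 H6 H7 H8 H9 H10 H11 H12

/-- Fact 1: in a `C5`-free 3-graph with min positive co-degree ≥ `n/2`
containing a `K4`, all six links of the `K4` have size exactly `n/2`, and every vertex
lies in exactly 3 of these six links. -/
theorem stmt_6 (n : ℕ) (E : Finset (Finset (Fin n))) (hE : isEdgeSet E)
    (hC5free : ¬ hasC5 E)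
    (hdeg : ∀ u v : Fin n, (link E u v).Nonempty → n ≤ 2 * (link E u v).card)
    (vi vj vk vl : Fin n) (hK4 : isK4 E vi vj vk vl) :
    (2 * (link E vi vj).card = n ∧ 2 * (link E vi vk).card = n ∧
     2 * (link E vi vl).card = n ∧ 2 * (link E vj vk).card = n ∧
     2 * (link E vj vl).card = n ∧ 2 * (link E vk vl).card = n) ∧
    ∀ v : Fin n,
      (if v ∈ link E vi vj then 1 else 0) + (if v ∈ link E vi vk then 1 else 0) +
      (if v ∈ link E vi vl then 1 else 0) + (if v ∈ link E vj vk then 1 else 0) +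
      (if v ∈ link E vj vl then 1 else 0) + (if v ∈ link E vk vl then 1 else 0) = 3 := by
  have hcount := count_le_three hE hC5free vi vj vk vl hK4
  obtain ⟨nij, nik, nil, njk, njl, nkl, eijk, eijl, eikl, ejkl⟩ := hK4
  have ne1 : (link E vi vj).Nonempty := ⟨vk, mem_link.2 eijk⟩
  have ne2 : (link E vi vk).Nonempty := ⟨vj, mem_link.2 (edge_of_eq eijk (by ext t; simp; tauto))⟩
  have ne3 : (link E vi vl).Nonempty := ⟨vj, mem_link.2 (edge_of_eq eijl (by ext t; simp; tauto))⟩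
  have ne4 : (link E vj vk).Nonempty := ⟨vi, mem_link.2 (edge_of_eq eijk (by ext t; simp; tauto))⟩
  have ne5 : (link E vj vl).Nonempty := ⟨vi, mem_link.2 (edge_of_eq eijl (by ext t; simp; tauto))⟩
  have ne6 : (link E vk vl).Nonempty := ⟨vi, mem_link.2 (edge_of_eq eikl (by ext t; simp; tauto))⟩
  have d1 := hdeg vi vj ne1
  have d2 := hdeg vi vk ne2
  have d3 := hdeg vi vl ne3
  have d4 := hdeg vj vk ne4
  have d5 := hdeg vj vl ne5
  have d6 := hdeg vk vl ne6
  have card_eq : ∀ s : Finset (Fin n), (∑ v : Fin n, if v ∈ s then 1 else 0) = s.card := by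
    intro s
    simp [Finset.sum_ite_mem, Finset.univ_inter]
  have hsum : (∑ v : Fin n,
      ((if v ∈ link E vi vj then 1 else 0) + (if v ∈ link E vi vk then 1 else 0) +
       (if v ∈ link E vi vl then 1 else 0) + (if v ∈ link E vj vk then 1 else 0) +
       (if v ∈ link E vj vl then 1 else 0) + (if v ∈ link E vk vl then 1 else 0))) =
      (link E vi vj).card + (link E vi vk).card + (link E vi vl).card +
      (link E vj vk).card + (link E vj vl).card + (link E vk vl).card := by
    simp only [Finset.sum_add_distrib, card_eq]
  have hle : (∑ v : Fin n,
      ((if v ∈ link E vi vj then 1 else 0) + (if v ∈ link E vi vk then 1 else 0) +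
       (if v ∈ link E vi vl then 1 else 0) + (if v ∈ link E vj vk then 1 else 0) +
       (if v ∈ link E vj vl then 1 else 0) + (if v ∈ link E vk vl then 1 else 0))) ≤ 3 * n := by
    calc (∑ v : Fin n,
      ((if v ∈ link E vi vj then 1 else 0) + (if v ∈ link E vi vk then 1 else 0) +
       (if v ∈ link E vi vl then 1 else 0) + (if v ∈ link E vj vk then 1 else 0) +
       (if v ∈ link E vj vl then 1 else 0) + (if v ∈ link E vk vl then 1 else 0)))
        ≤ ∑ _v : Fin n, 3 := Finset.sum_le_sum (fun v _ => hcount v)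
      _ = 3 * n := by simp [Finset.card_univ, mul_comm]
  rw [hsum] at hle
  refine ⟨⟨by omega, by omega, by omega, by omega, by omega, by omega⟩, ?_⟩
  intro v
  by_contra hv
  have hlt : (if v ∈ link E vi vj then 1 else 0) + (if v ∈ link E vi vk then 1 else 0) +
      (if v ∈ link E vi vl then 1 else 0) + (if v ∈ link E vj vk then 1 else 0) +
      (if v ∈ link E vj vl then 1 else 0) + (if v ∈ link E vk vl then 1 else 0) < 3 :=
    lt_of_le_of_ne (hcount v) hv
  have hstrict : (∑ w : Fin n,
      ((if w ∈ link E vi vj then 1 else 0) + (if w ∈ link E vi vk then 1 else 0) +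
       (if w ∈ link E vi vl then 1 else 0) + (if w ∈ link E vj vk then 1 else 0) +
       (if w ∈ link E vj vl then 1 else 0) + (if w ∈ link E vk vl then 1 else 0))) <
      ∑ _w : Fin n, 3 :=
    Finset.sum_lt_sum (fun w _ => hcount w) ⟨v, Finset.mem_univ v, hlt⟩
  rw [hsum] at hstrict
  have h3n : (∑ _w : Fin n, (3:ℕ)) = 3 * n := by simp [Finset.card_univ, mul_comm]
  rw [h3n] at hstrict
  omega
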